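/- arXiv:1606.06809 — 5 statements merged into one kernel-verified Lean document; each statement's English description precedes it below -/
import Mathlib

section
/- Let A be an n × m matrix over ℤ/2ℤ such that the map r ↦ A·r is surjective, and suppose there exists a vector k in (ℤ/2ℤ)^m with A·k = 0 and with the sum of the entries of k equal to 1. Let J be the n × m all-ones matrix. Then the map r ↦ (A + J)·r is surjective. -/
/-!
Write `σ(r) = ∑ i, r i`. Since `J *ᵥ r` is the constant vector `σ(r)`, the matrices `A + J` and
`A` agree on vectors with `σ(r) = 0`. Given `r`, the corrected vector `r + σ(r) • k` has the same
image under `A` (as `A *ᵥ k = 0`) and coordinate sum `σ(r) + σ(r) = 0` in characteristic two, so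
`(A + J) *ᵥ (r + σ(r) • k) = A *ᵥ r` and the range of `A + J` contains that of `A`.
-/

open Matrix

section

variable {R ι κ : Type*} [CommRing R] [Fintype κ]

theorem Matrix.mulVec_eq_sum_of_forall_eq_one {J : Matrix ι κ R} (hJ : ∀ i j, J i j = 1)
    (v : κ → R) : J *ᵥ v = fun _ => ∑ j, v j := by
  ext i
  simp [mulVec, dotProduct, hJ]

theorem Matrix.add_mulVec_of_sum_eq_zero (A : Matrix ι κ R) {J : Matrix ι κ R}
    (hJ : ∀ i j, J i j = 1) {v : κ → R} (hv : ∑ j, v j = 0) : (A + J) *ᵥ v = A *ᵥ v := by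
  rw [add_mulVec, mulVec_eq_sum_of_forall_eq_one hJ, hv]
  exact add_zero _

theorem Matrix.add_mulVec_add_sum_smul [CharP R 2] (A : Matrix ι κ R) {J : Matrix ι κ R}
    (hJ : ∀ i j, J i j = 1) {k : κ → R} (hAk : A *ᵥ k = 0) (hk : ∑ j, k j = 1) (r : κ → R) :
    (A + J) *ᵥ (r + (∑ j, r j) • k) = A *ᵥ r := by
  have hsum : ∑ j, (r + (∑ j, r j) • k) j = 0 := by
    simp only [Pi.add_apply, Pi.smul_apply, smul_eq_mul, Finset.sum_add_distrib,
      ← Finset.mul_sum, hk, mul_one, CharTwo.add_self_eq_zero]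
  rw [add_mulVec_of_sum_eq_zero A hJ hsum, mulVec_add, mulVec_smul, hAk, smul_zero, add_zero]

end

theorem freeze_surjective (n m : ℕ) (A : Matrix (Fin n) (Fin m) (ZMod 2))
    (hA : Function.Surjective A.mulVec)
    (hk : ∃ k : Fin m → ZMod 2, A.mulVec k = 0 ∧ (∑ i, k i) = 1)
    (J : Matrix (Fin n) (Fin m) (ZMod 2)) (hJ : ∀ i j, J i j = 1) :
    Function.Surjective (A + J).mulVec := by
  obtain ⟨k, hAk, hk1⟩ := hk
  intro y
  obtain ⟨r, rfl⟩ := hA y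
  exact ⟨_, A.add_mulVec_add_sum_smul hJ hAk hk1 r⟩
end

section
/- Let A be an n × m matrix over ℤ/2ℤ such that the map r ↦ A·r is surjective and such that every vector k with A·k = 0 has the sum of its entries equal to 0. Say that an index i in {0,…,n−1} satisfies (⋆) if there exists r in (ℤ/2ℤ)^m with A·r = e_i (the i-th standard basis vector) and the sum of the entries of r equal to 1. Then for any r in (ℤ/2ℤ)^m with A·r = 𝟙 (the all-ones vector of (ℤ/2ℤ)^n), the sum of the entries of r equals 0 if and only if the number of indices i satisfying (⋆) is even. -/
/-!
Pick preimages `s i` of the basis vectors `e i`. Since every kernel vector has entry sum zero,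
the entry sum of a preimage depends only on its image, so `(⋆)` holds at `i` exactly when
`∑ j, s i j = 1`, and `∑ i, s i` is a preimage of `𝟙` with the same entry sum as `r`.
Hence `∑ j, r j = ∑ i, ∑ j, s i j`, which in `ZMod 2` is the number of indices with `(⋆)`.
-/

open Matrix

theorem Matrix.sum_eq_sum_of_mulVec_eq {R m n : Type*} [Ring R] [Fintype m] [Fintype n]
    {A : Matrix n m R} (hker : ∀ k : m → R, A *ᵥ k = 0 → ∑ j, k j = 0)
    {a b : m → R} (h : A *ᵥ a = A *ᵥ b) : ∑ j, a j = ∑ j, b j := by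
  have hab := hker (a - b) (by rw [mulVec_sub, h, sub_self])
  simpa only [Pi.sub_apply, Finset.sum_sub_distrib, sub_eq_zero] using hab

theorem ZMod.sum_eq_card_eq_one {ι : Type*} [Fintype ι] (σ : ι → ZMod 2) :
    ∑ i, σ i = Nat.card {i // σ i = 1} := by
  have h01 : ∀ x : ZMod 2, x = if x = 1 then 1 else 0 := by decide
  rw [Finset.sum_congr rfl fun i _ => h01 (σ i), Finset.sum_boole, Nat.card_eq_fintype_card,
    Fintype.card_subtype]

theorem all_ones_parity (n m : ℕ) (A : Matrix (Fin n) (Fin m) (ZMod 2))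
    (hA : Function.Surjective A.mulVec)
    (hker : ∀ k : Fin m → ZMod 2, A.mulVec k = 0 → (∑ j, k j) = 0)
    (r : Fin m → ZMod 2) (hr : A.mulVec r = fun _ => 1) :
    (∑ j, r j) = 0 ↔
      Even (Nat.card {i : Fin n //
        ∃ s : Fin m → ZMod 2, A.mulVec s = Pi.single i 1 ∧ (∑ j, s j) = 1}) := by
  choose s hs using fun i : Fin n => hA (Pi.single i 1)
  have hstar : ∀ i, (∃ t : Fin m → ZMod 2, A *ᵥ t = Pi.single i 1 ∧ ∑ j, t j = 1) ↔
      ∑ j, s i j = 1 := fun i =>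
    ⟨fun ⟨t, ht, ht1⟩ => (sum_eq_sum_of_mulVec_eq hker ((hs i).trans ht.symm)).trans ht1,
      fun h => ⟨s i, hs i, h⟩⟩
  have hs_sum : A *ᵥ ∑ i, s i = fun _ => 1 := by
    rw [mulVec_sum, funext hs, Finset.univ_sum_single (fun _ => (1 : ZMod 2))]
  have hr_sum : ∑ j, r j = ∑ i, ∑ j, s i j := by
    rw [sum_eq_sum_of_mulVec_eq hker (hr.trans hs_sum.symm), Finset.sum_comm]
    simp only [Finset.sum_apply]
  rw [hr_sum, ZMod.sum_eq_card_eq_one, Nat.card_congr (Equiv.subtypeEquivRight hstar),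
    ZMod.natCast_eq_zero_iff_even]
end

section
/- Let A be an n × m matrix over ℤ/2ℤ such that the map r ↦ A·r is surjective and such that every vector k with A·k = 0 has the sum of its entries equal to 0. Let J be the n × m all-ones matrix. Say that an index i in {0,…,n−1} satisfies (⋆) if there exists r in (ℤ/2ℤ)^m with A·r = e_i (the i-th standard basis vector) and the sum of the entries of r equal to 1. Then the following are equivalent: (1) for every index i there exists r in (ℤ/2ℤ)^m with (A + J)·r = e_i; (2) the number of indices i satisfying (⋆) is even. -/
/-!
Write `σ r = ∑ j, r j`. Since `σ` vanishes on the kernel of the surjection `A`, it factors as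
`σ = φ ∘ A` for a functional `φ`, and the indices satisfying (⋆) are exactly those with
`φ eᵢ = 1`. As `J r = σ r • 𝟙`, the matrix `A + J` is the rank-one perturbation
`r ↦ A r + φ (A r) • 𝟙`, which is again surjective if and only if `1 + φ 𝟙 ≠ 0`, i.e.
`φ 𝟙 = ∑ i, φ eᵢ = 0` in `ZMod 2`.
-/

open Function Matrix

namespace LinearMap

theorem exists_comp_eq_of_surjective_of_ker_le {R M M₂ M₃ : Type*} [Ring R]
    [AddCommGroup M] [Module R M] [AddCommGroup M₂] [Module R M₂] [AddCommGroup M₃] [Module R M₃]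
    {f : M →ₗ[R] M₂} (hf : Surjective f) {g : M →ₗ[R] M₃} (h : ker f ≤ ker g) :
    ∃ φ : M₂ →ₗ[R] M₃, φ ∘ₗ f = g :=
  ⟨(ker f).liftQ g h ∘ₗ (f.quotKerEquivOfSurjective hf).symm, by
    ext x
    change (ker f).liftQ g h ((f.quotKerEquivOfSurjective hf).symm (f x)) = g x
    rw [(LinearEquiv.symm_apply_eq _).2
      (f.quotKerEquivOfSurjective_apply_mk hf x).symm, Submodule.liftQ_apply]⟩

theorem surjective_add_smulRight_comp_iff {K V W : Type*} [Field K]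
    [AddCommGroup V] [Module K V] [AddCommGroup W] [Module K W]
    {A : V →ₗ[K] W} (hA : Surjective A) (φ : W →ₗ[K] K) (u : W) :
    Surjective (A + (φ ∘ₗ A).smulRight u) ↔ 1 + φ u ≠ 0 := by
  constructor
  · intro hB hu
    have hφB : φ ∘ₗ (A + (φ ∘ₗ A).smulRight u) = 0 := by
      ext v
      simp only [comp_apply, add_apply, smulRight_apply, map_add, map_smul, smul_eq_mul,
        zero_apply]
      linear_combination φ (A v) * hu
    have hφ : φ = 0 := by
      ext w
      obtain ⟨v, rfl⟩ := hB w
      exact LinearMap.congr_fun hφB v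
    simp [hφ] at hu
  · intro hu w
    obtain ⟨t, ht⟩ : ∃ t, t * (1 + φ u) = φ w := ⟨_, div_mul_cancel₀ _ hu⟩
    obtain ⟨v, hv⟩ := hA (w - t • u)
    have hφAv : φ (A v) = t := by
      rw [hv, map_sub, map_smul, smul_eq_mul]
      linear_combination -ht
    exact ⟨v, by rw [add_apply, smulRight_apply, comp_apply, hφAv, hv, sub_add_cancel]⟩

end LinearMap

theorem Matrix.mulVec_surjective_iff_forall_single {R m n : Type*} [CommSemiring R]
    [Fintype m] [DecidableEq m] [Fintype n] {A : Matrix m n R} :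
    Surjective A.mulVec ↔ ∀ i, ∃ r, A *ᵥ r = Pi.single i 1 := by
  refine ⟨fun h i => h _, fun h => ?_⟩
  choose cols hcols using h
  refine mulVec_surjective_iff_exists_right_inverse.2 ⟨(of cols)ᵀ, ext fun i j => ?_⟩
  rw [one_eq_pi_single, Pi.single_comm, ← hcols j]
  rfl

theorem ZMod.even_card_eq_one_iff_sum_eq_zero {ι : Type*} [Fintype ι] (f : ι → ZMod 2) :
    Even (Nat.card {i // f i = 1}) ↔ ∑ i, f i = 0 := by
  classical
  have hf : ∀ i, f i = if f i = 1 then 1 else 0 := fun i => by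
    generalize f i = x
    revert x
    decide
  rw [← ZMod.natCast_eq_zero_iff_even, Nat.card_eq_fintype_card, Fintype.card_subtype,
    Finset.natCast_card_filter, ← Finset.sum_congr rfl fun i _ => hf i]

theorem main2 (n m : ℕ) (A : Matrix (Fin n) (Fin m) (ZMod 2))
    (hA : Function.Surjective A.mulVec)
    (hker : ∀ k : Fin m → ZMod 2, A.mulVec k = 0 → (∑ j, k j) = 0)
    (J : Matrix (Fin n) (Fin m) (ZMod 2)) (hJ : ∀ i j, J i j = 1) :
    (∀ i : Fin n, ∃ r : Fin m → ZMod 2, (A + J).mulVec r = Pi.single i 1) ↔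
      Even (Nat.card {i : Fin n //
        ∃ r : Fin m → ZMod 2, A.mulVec r = Pi.single i 1 ∧ (∑ j, r j) = 1}) := by
  obtain ⟨φ, hφ⟩ := A.mulVecLin.exists_comp_eq_of_surjective_of_ker_le hA
    (g := ∑ j, LinearMap.proj j) fun k hk => by simpa using hker k hk
  have hφA : ∀ r, φ (A *ᵥ r) = ∑ j, r j := fun r => by simpa using LinearMap.congr_fun hφ r
  have hAJ : (A + J).mulVecLin = A.mulVecLin + (φ ∘ₗ A.mulVecLin).smulRight 1 := by
    refine LinearMap.ext fun r => funext fun i => ?_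
    simp [mulVec, dotProduct, hJ, hφA]
  have hstar : ∀ i, (∃ r, A *ᵥ r = Pi.single i 1 ∧ ∑ j, r j = 1) ↔ φ (Pi.single i 1) = 1 :=
    fun i => ⟨fun ⟨r, hr, hsum⟩ => by rw [← hr, hφA, hsum],
      fun h => (hA _).imp fun r hr => ⟨hr, by rw [← hφA, hr, h]⟩⟩
  have hones : φ 1 = ∑ i, φ (Pi.single i 1) := by
    rw [← map_sum, Finset.univ_sum_single]
    rfl
  rw [← Matrix.mulVec_surjective_iff_forall_single, ← Matrix.coe_mulVecLin, hAJ,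
    LinearMap.surjective_add_smulRight_comp_iff hA, hones]
  simp only [hstar, ZMod.even_card_eq_one_iff_sum_eq_zero]
  generalize ∑ i, φ (Pi.single i 1) = x
  revert x
  decide
end

section
/- Let A be an n × m matrix over ℤ/2ℤ such that the map r ↦ A·r is surjective and such that every vector k with A·k = 0 has the sum of its entries equal to 0. Say that an index i satisfies (⋆) if there exists r in (ℤ/2ℤ)^m with A·r = e_i and the sum of the entries of r equal to 1. Suppose the number of indices satisfying (⋆) is even, and let i₀ be an index satisfying (⋆). Then there exists r in (ℤ/2ℤ)^m with the sum of its entries equal to 1 and A·r = 𝟙 + e_{i₀}, where 𝟙 is the all-ones vector of (ℤ/2ℤ)^n; consequently (A + J)·r = e_{i₀}, where J is the n × m all-ones matrix. -/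
/-!
Since `A` is onto, pick `r i` with `A r i = e_i`. Because every kernel vector has even weight, the
parity of `∑ j, r i j` does not depend on the choice of `r i`, so `i` satisfies (⋆) exactly when
`r i` has odd weight. Summing, `r := ∑ i, r i` satisfies `A r = 𝟙`, and its weight has the parity
of the number of indices satisfying (⋆), which is even. Adding a witness of (⋆) for `i₀` gives an
odd-weight vector mapped to `𝟙 + e_{i₀}`; as `J` sends an odd-weight vector to `𝟙`, the
`𝟙`s cancel in characteristic two.
-/

open Matrix

theorem ZMod.sum_eq_natCard_eq_one {ι : Type*} [Fintype ι] (f : ι → ZMod 2) :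
    ∑ i, f i = Nat.card {i // f i = 1} := by
  classical
  have hf : ∀ i, f i = if f i = 1 then 1 else 0 := fun i => by
    rcases (by decide : ∀ x : ZMod 2, x = 0 ∨ x = 1) (f i) with h | h <;> simp [h]
  rw [Finset.sum_congr rfl fun i _ => hf i, Finset.sum_boole, Nat.card_eq_fintype_card,
    Fintype.card_subtype]

theorem Matrix.mulVec_of_forall_eq_one {ι κ R : Type*} [Fintype κ] [NonAssocSemiring R]
    {J : Matrix ι κ R} (hJ : ∀ i j, J i j = 1) (v : κ → R) :
    J *ᵥ v = fun _ => ∑ j, v j := by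
  ext i
  simp [mulVec, dotProduct, hJ]

section KernelOfEvenWeight

variable {ι κ R : Type*} [Fintype κ] [CommRing R] {A : Matrix ι κ R}

theorem Matrix.sum_eq_of_mulVec_eq (hker : ∀ k, A *ᵥ k = 0 → ∑ j, k j = 0)
    {r r' : κ → R} (h : A *ᵥ r = A *ᵥ r') : ∑ j, r j = ∑ j, r' j := by
  rw [← sub_eq_zero, ← Finset.sum_sub_distrib]
  exact hker _ (by rw [← Pi.sub_def, mulVec_sub, h, sub_self])

theorem Matrix.exists_mulVec_eq_and_sum_eq_iff (hker : ∀ k, A *ᵥ k = 0 → ∑ j, k j = 0)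
    {b : ι → R} {r : κ → R} (hr : A *ᵥ r = b) (c : R) :
    (∃ r', A *ᵥ r' = b ∧ ∑ j, r' j = c) ↔ ∑ j, r j = c := by
  refine ⟨?_, fun h => ⟨r, hr, h⟩⟩
  rintro ⟨r', hr', rfl⟩
  exact sum_eq_of_mulVec_eq hker (hr.trans hr'.symm)

end KernelOfEvenWeight

theorem constructive_case (n m : ℕ) (A : Matrix (Fin n) (Fin m) (ZMod 2))
    (hA : Function.Surjective A.mulVec)
    (hker : ∀ k : Fin m → ZMod 2, A.mulVec k = 0 → (∑ j, k j) = 0)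
    (J : Matrix (Fin n) (Fin m) (ZMod 2)) (hJ : ∀ i j, J i j = 1)
    (heven : Even (Nat.card {i : Fin n //
      ∃ r : Fin m → ZMod 2, A.mulVec r = Pi.single i 1 ∧ (∑ j, r j) = 1}))
    (i₀ : Fin n)
    (hi₀ : ∃ r : Fin m → ZMod 2, A.mulVec r = Pi.single i₀ 1 ∧ (∑ j, r j) = 1) :
    ∃ r : Fin m → ZMod 2, (∑ j, r j) = 1 ∧
      A.mulVec r = (fun _ => 1) + Pi.single i₀ 1 ∧
      (A + J).mulVec r = Pi.single i₀ 1 := by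
  choose r hr using fun i : Fin n => hA (Pi.single i 1)
  obtain ⟨r₀, hr₀, hsum₀⟩ := hi₀
  have hA_sum : A *ᵥ ∑ i, r i = fun _ => 1 := by
    rw [mulVec_sum, Finset.sum_congr rfl fun i _ => hr i, Finset.univ_sum_single (fun _ => 1)]
  have hweight_sum : ∑ j, (∑ i, r i) j = 0 := calc
    ∑ j, (∑ i, r i) j = ∑ i, ∑ j, r i j := by
      simp only [Finset.sum_apply]; exact Finset.sum_comm
    _ = Nat.card {i // ∑ j, r i j = 1} := ZMod.sum_eq_natCard_eq_one _
    _ = 0 := by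
      rw [← Nat.card_congr (Equiv.subtypeEquivRight fun i =>
        exists_mulVec_eq_and_sum_eq_iff hker (hr i) 1), ZMod.natCast_eq_zero_iff]
      exact heven.two_dvd
  have hsum : ∑ j, (∑ i, r i + r₀) j = 1 := by
    simp only [Pi.add_apply, Finset.sum_add_distrib, hweight_sum, hsum₀, zero_add]
  have hAr : A *ᵥ (∑ i, r i + r₀) = (fun _ => 1) + Pi.single i₀ 1 := by
    rw [mulVec_add, hA_sum, hr₀]
  refine ⟨∑ i, r i + r₀, hsum, hAr, ?_⟩
  ext k
  rw [add_mulVec, hAr, mulVec_of_forall_eq_one hJ, hsum]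
  simp only [Pi.add_apply, add_right_comm _ _ (1 : ZMod 2), CharTwo.add_self_eq_zero, zero_add]
end

section
/- Let A be an n × m matrix over ℤ/2ℤ such that the map r ↦ A·r is surjective and such that every vector k with A·k = 0 has the sum of its entries equal to 0. Let J be the n × m all-ones matrix. Say that an index i satisfies (⋆) if there exists r in (ℤ/2ℤ)^m with A·r = e_i and the sum of the entries of r equal to 1. If the number of indices satisfying (⋆) is odd, then for every index i₀ satisfying (⋆) there is no r in (ℤ/2ℤ)^m with (A + J)·r = e_{i₀}. -/
/-!
The coordinate sum `σ r = ∑ j, r j` vanishes on `ker A` and `A` is onto, so `σ = φ ∘ A` for a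
linear functional `φ`. Index `i` satisfies (⋆) exactly when `φ eᵢ = 1`, so the parity of the number
of such indices is `∑ i, φ eᵢ = φ 𝟙`; hence `φ 𝟙 = 1`. Since `J r = (σ r) 𝟙`, applying `φ` to
`A r + J r = e_{i₀}` gives `σ r + σ r = φ e_{i₀} = 1`, impossible in characteristic two.
-/

open Matrix

theorem LinearMap.exists_comp_eq_of_surjective_of_ker_le_s11 {R M M₂ M₃ : Type*} [Ring R]
    [AddCommGroup M] [AddCommGroup M₂] [AddCommGroup M₃] [Module R M] [Module R M₂]
    [Module R M₃] {f : M →ₗ[R] M₂} (hf : Function.Surjective f) {g : M →ₗ[R] M₃}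
    (h : LinearMap.ker f ≤ LinearMap.ker g) : ∃ φ : M₂ →ₗ[R] M₃, φ ∘ₗ f = g :=
  ⟨(LinearMap.ker f).liftQ g h ∘ₗ (f.quotKerEquivOfSurjective hf).symm.toLinearMap, by
    ext x
    simp⟩

theorem Matrix.exists_linearMap_comp_mulVec_eq_sum {R ι κ : Type*} [CommRing R] [Fintype ι]
    [Fintype κ] {A : Matrix ι κ R} (hA : Function.Surjective A.mulVec)
    (hker : ∀ k, A *ᵥ k = 0 → ∑ j, k j = 0) :
    ∃ φ : (ι → R) →ₗ[R] R, ∀ r, φ (A *ᵥ r) = ∑ j, r j := by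
  let σ := Fintype.linearCombination R (fun _ : κ => (1 : R))
  have hσ (r : κ → R) : σ r = ∑ j, r j := by simp [σ, Fintype.linearCombination_apply]
  obtain ⟨φ, hφ⟩ := LinearMap.exists_comp_eq_of_surjective_of_ker_le_s11 (f := A.mulVecLin) hA
    (g := σ) fun k hk => by simpa [hσ] using hker k hk
  exact ⟨φ, fun r => by rw [← hσ, ← hφ]; rfl⟩

theorem ZMod.natCast_card_eq_one_eq_sum {ι : Type*} [Fintype ι] (x : ι → ZMod 2) :
    (Nat.card {i // x i = 1} : ZMod 2) = ∑ i, x i := by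
  classical
  have h01 : ∀ a : ZMod 2, (if a = 1 then 1 else 0) = a := by decide
  rw [Nat.card_eq_fintype_card, Fintype.card_subtype, ← Finset.sum_boole]
  exact Finset.sum_congr rfl fun i _ => h01 (x i)

theorem ZMod.linearMap_apply_one_eq_card {ι : Type*} [Fintype ι] [DecidableEq ι]
    (φ : (ι → ZMod 2) →ₗ[ZMod 2] ZMod 2) :
    φ 1 = Nat.card {i // φ (Pi.single i 1) = 1} := by
  rw [ZMod.natCast_card_eq_one_eq_sum, ← map_sum, Finset.univ_sum_single (fun _ => 1)]
  rfl

theorem Matrix.mulVec_eq_sum_smul_one_of_forall_eq_one {R ι κ : Type*} [NonAssocSemiring R]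
    [Fintype κ] {J : Matrix ι κ R} (hJ : ∀ i j, J i j = 1) (r : κ → R) :
    J *ᵥ r = (∑ j, r j) • 1 := by
  ext i
  simp [mulVec, dotProduct, hJ]

theorem obstruction (n m : ℕ) (A : Matrix (Fin n) (Fin m) (ZMod 2))
    (hA : Function.Surjective A.mulVec)
    (hker : ∀ k : Fin m → ZMod 2, A.mulVec k = 0 → (∑ j, k j) = 0)
    (J : Matrix (Fin n) (Fin m) (ZMod 2)) (hJ : ∀ i j, J i j = 1)
    (hodd : Odd (Nat.card {i : Fin n //
      ∃ r : Fin m → ZMod 2, A.mulVec r = Pi.single i 1 ∧ (∑ j, r j) = 1}))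
    (i₀ : Fin n)
    (hi₀ : ∃ r : Fin m → ZMod 2, A.mulVec r = Pi.single i₀ 1 ∧ (∑ j, r j) = 1) :
    ¬ ∃ r : Fin m → ZMod 2, (A + J).mulVec r = Pi.single i₀ 1 := by
  obtain ⟨φ, hφ⟩ := exists_linearMap_comp_mulVec_eq_sum hA hker
  have hstar (i : Fin n) :
      (∃ r, A *ᵥ r = Pi.single i 1 ∧ ∑ j, r j = 1) ↔ φ (Pi.single i 1) = 1 := by
    refine ⟨fun ⟨r, hr, hs⟩ => hr ▸ (hφ r).trans hs, fun h => ?_⟩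
    obtain ⟨r, hr⟩ := hA (Pi.single i 1)
    exact ⟨r, hr, (hφ r).symm.trans (hr ▸ h)⟩
  have hone : φ 1 = 1 := by
    rw [ZMod.linearMap_apply_one_eq_card, ← Nat.card_congr (Equiv.subtypeEquivRight hstar)]
    exact (ZMod.natCast_eq_one_iff_odd).mpr hodd
  rintro ⟨r, hr⟩
  have hφr : φ (A *ᵥ r + (∑ j, r j) • 1) = φ (Pi.single i₀ 1) := by
    rw [← hr, add_mulVec, mulVec_eq_sum_smul_one_of_forall_eq_one hJ]
  rw [map_add, map_smul, hone, hφ, (hstar i₀).mp hi₀, smul_eq_mul, mul_one,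
    CharTwo.add_self_eq_zero] at hφr
  exact zero_ne_one hφr
end
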